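/- For every integer n ≥ −1: (i) the derived subalgebra [F_nO, F_nO] equals span{U_{2n+3+k} − 4·U_{2n+1+k} : k ∈ ℕ}, and the quotient vector space F_nO/[F_nO, F_nO] has dimension n + 3; (ii) the derived subalgebra [F_n b, F_n b] equals [F_nO, F_nO] ⊕ span{V_{2n+1+k} : k ∈ ℕ}, and the quotient vector space F_n b/[F_n b, F_n b] has dimension 2n + 4. -/

import Mathlib

/-!
Bracketing two generators of the filtration gives
`[U (m+i), U (m+j)] = (i - j) • (U (2m+i+j+1) - 4 • U (2m+i+j-1))` and
`[U (m+i), V (m+j)] ∈ span {V (2m+s)}`; conversely `U (2m+2+s) - 4 • U (2m+s)` is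
`(s+1)⁻¹ • [U (m+s+1), U m]`, while `V (2m) = 4⁻¹ • [U m, V (m+1)]` and
`V (2m+s+1) = 2⁻¹ • ([U (m+s), V m] + [U m, V (m+s)])`. Division by `s + 1`, `2`, `4` is where
characteristic zero enters.

Modulo the derived algebra, `U (i+2) ≡ 4 • U i` for `i ≥ 2m`, so the classes of
`U m, …, U (2m+1)` (together with `V m, …, V (2m-1)` for `b`) span the abelianisation. They are
independent because the linear map that folds every index into this window along these
congruences, prescribed on the independent family `U, V`, kills the derived algebra and sends
them to a basis.
-/

open Submodule Set

section LieSpan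

variable {R L : Type*} [CommRing R] [LieRing L] [LieAlgebra R L]

theorem span_lie_span_span (S T : Set L) :
    span R {x | ∃ y ∈ span R S, ∃ z ∈ span R T, x = ⁅y, z⁆} =
      span R (image2 (⁅·, ·⁆) S T) := by
  let bracket : L →ₗ[R] L →ₗ[R] L := LieModule.toEnd R L L
  calc _ = map₂ bracket (span R S) (span R T) := by
        rw [map₂_eq_span_image2]
        congr 1
        ext x
        simp [bracket, eq_comm]
    _ = _ := map₂_span_span R bracket S T

theorem span_image2_lie_comm (S T : Set L) :
    span R (image2 (⁅·, ·⁆) S T) = span R (image2 (⁅·, ·⁆) T S) := by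
  suffices h : ∀ A B : Set L, span R (image2 (⁅·, ·⁆) A B) ≤ span R (image2 (⁅·, ·⁆) B A) from
    le_antisymm (h S T) (h T S)
  intro A B
  rw [span_le]
  rintro _ ⟨y, hy, z, hz, rfl⟩
  show ⁅y, z⁆ ∈ span R _
  rw [← lie_skew]
  exact neg_mem (subset_span ⟨z, hz, y, hy, rfl⟩)

end LieSpan

theorem LinearIndependent.exists_linearMap_apply_eq {ι K V V' : Type*} [Field K]
    [AddCommGroup V] [Module K V] [AddCommGroup V'] [Module K V'] {v : ι → V}
    (hv : LinearIndependent K v) (c : ι → V') : ∃ φ : V →ₗ[K] V', ∀ i, φ (v i) = c i := by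
  obtain ⟨φ, hφ⟩ := LinearMap.exists_extend ((Module.Basis.span hv).constr K c)
  refine ⟨φ, fun i => ?_⟩
  have := LinearMap.congr_fun hφ (Module.Basis.span hv i)
  rwa [LinearMap.comp_apply, Module.Basis.constr_basis, Module.Basis.span_apply] at this

theorem mem_span_sub_smul_sup_span_window {R M : Type*} [Ring R] [AddCommGroup M] [Module R M]
    (U : ℕ → M) (c : R) (m j : ℕ) :
    U (m + j) ∈ span R (range fun s => U (2 * m + 2 + s) - c • U (2 * m + s)) ⊔
      span R (range fun t : Fin (m + 2) => U (m + t)) := by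
  induction j using Nat.strong_induction_on with
  | _ j ih =>
    by_cases hj : j < m + 2
    · exact mem_sup_right (subset_span ⟨⟨j, hj⟩, rfl⟩)
    · obtain ⟨s, rfl⟩ : ∃ s, j = m + 2 + s := ⟨j - (m + 2), by omega⟩
      have hsplit : U (m + (m + 2 + s)) =
          (U (2 * m + 2 + s) - c • U (2 * m + s)) + c • U (m + (m + s)) := by
        rw [show m + (m + 2 + s) = 2 * m + 2 + s by omega, show m + (m + s) = 2 * m + s by omega]
        abel
      rw [hsplit]
      exact add_mem (mem_sup_left (subset_span ⟨s, rfl⟩)) (smul_mem _ _ (ih _ (by omega)))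

theorem finrank_quotient_comap_eq_card {R M ι : Type*} [Field R] [AddCommGroup M] [Module R M]
    [Fintype ι] [DecidableEq ι] {F D : Submodule R M} (u : ι → M) (φ : M →ₗ[R] ι → R)
    (hD : D ≤ LinearMap.ker φ) (hu : ∀ i, u i ∈ F) (hφu : ∀ i, φ (u i) = Pi.single i 1)
    (hF : F ≤ D ⊔ span R (range u)) :
    Module.finrank R (F ⧸ comap F.subtype D) = Fintype.card ι := by
  have hφ_sum (a : ι → R) : φ (∑ i, a i • u i) = a := by
    ext j
    simp [map_sum, hφu, Pi.single_apply]
  have hsurj : Function.Surjective (φ ∘ₗ F.subtype) := fun a =>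
    ⟨⟨∑ i, a i • u i, sum_mem fun i _ => smul_mem _ _ (hu i)⟩, hφ_sum a⟩
  have hker : LinearMap.ker (φ ∘ₗ F.subtype) = comap F.subtype D := by
    ext ⟨x, hx⟩
    simp only [LinearMap.mem_ker, LinearMap.comp_apply, subtype_apply, mem_comap]
    refine ⟨fun h0 => ?_, fun hxD => hD hxD⟩
    obtain ⟨d, hd, y, hy, rfl⟩ := mem_sup.mp (hF hx)
    obtain ⟨a, rfl⟩ := (mem_span_range_iff_exists_fun R).mp hy
    have ha : a = 0 := by rwa [map_add, hD hd, zero_add, hφ_sum] at h0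
    simpa [ha] using hd
  rw [← hker, (LinearMap.quotKerEquivOfSurjective _ hsurj).finrank_eq,
    Module.finrank_fintype_fun_eq_card]

section Coordinates

variable {k ι : Type*} [Semiring k] [DecidableEq ι]

def windowSingle (m n : ℕ) (e : Fin n → ι) (i : ℕ) : ι → k :=
  if h : m ≤ i ∧ i < m + n then Pi.single (e ⟨i - m, by omega⟩) 1 else 0

theorem windowSingle_add (m n : ℕ) (e : Fin n → ι) (t : Fin n) :
    (windowSingle m n e (m + t) : ι → k) = Pi.single (e t) 1 := by
  rw [windowSingle, dif_pos (by omega)]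
  simp

theorem windowSingle_of_le {m n i : ℕ} (e : Fin n → ι) (h : m + n ≤ i) :
    (windowSingle m n e i : ι → k) = 0 :=
  dif_neg (by omega)

/-- Modulo `span {U (i + 2) - c • U i | i ≥ 2m}`, every `U i` with `i ≥ m` is congruent to a
multiple of one of `U m, …, U (2m + 1)`; `foldedCoord c m e i` is its coordinate vector with
respect to these, the `t`-th one sent to the basis vector at `e t`. -/
def foldedCoord (c : k) (m : ℕ) (e : Fin (m + 2) → ι) (i : ℕ) : ι → k :=
  if 2 * m + 2 ≤ i then c • foldedCoord c m e (i - 2) else windowSingle m (m + 2) e i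
termination_by i
decreasing_by omega

theorem foldedCoord_add (c : k) (m : ℕ) (e : Fin (m + 2) → ι) (t : Fin (m + 2)) :
    foldedCoord c m e (m + t) = Pi.single (e t) 1 := by
  rw [foldedCoord, if_neg (by omega), windowSingle_add]

theorem foldedCoord_two_mul_add_two (c : k) (m : ℕ) (e : Fin (m + 2) → ι) (j : ℕ) :
    foldedCoord c m e (2 * m + 2 + j) = c • foldedCoord c m e (2 * m + j) := by
  rw [foldedCoord, if_pos (by omega), show 2 * m + 2 + j - 2 = 2 * m + j by omega]

end Coordinates

section Brackets

variable {k b : Type*} [Field k] [LieRing b] [LieAlgebra k b] {Uf Vf : ℕ → b}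

theorem lie_Uf_Uf_mem_span
    (hUU : ∀ i j : ℕ, ⁅Uf i, Uf j⁆ =
      (((i : ℤ) - (j : ℤ)) : k) • (Uf (i + j + 1) - (4 : k) • Uf (i + j - 1)))
    (m i j : ℕ) :
    ⁅Uf (m + i), Uf (m + j)⁆ ∈
      span k (range fun s => Uf (2 * m + 2 + s) - (4 : k) • Uf (2 * m + s)) := by
  obtain ⟨rfl, rfl⟩ | ⟨s, hs⟩ : (i = 0 ∧ j = 0) ∨ ∃ s, i + j = s + 1 :=
    (i + j).eq_zero_or_eq_succ_pred.imp (by omega) fun h => ⟨_, h⟩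
  · simp
  · rw [hUU, show m + i + (m + j) + 1 = 2 * m + 2 + s by omega,
      show m + i + (m + j) - 1 = 2 * m + s by omega]
    exact smul_mem _ _ (subset_span ⟨s, rfl⟩)

theorem Uf_sub_four_smul_Uf_eq_smul_lie [CharZero k]
    (hUU : ∀ i j : ℕ, ⁅Uf i, Uf j⁆ =
      (((i : ℤ) - (j : ℤ)) : k) • (Uf (i + j + 1) - (4 : k) • Uf (i + j - 1)))
    (m s : ℕ) :
    Uf (2 * m + 2 + s) - (4 : k) • Uf (2 * m + s) =
      ((s : k) + 1)⁻¹ • ⁅Uf (m + (s + 1)), Uf m⁆ := by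
  rw [hUU, show m + (s + 1) + m + 1 = 2 * m + 2 + s by omega,
    show m + (s + 1) + m - 1 = 2 * m + s by omega, smul_smul]
  convert (one_smul k _).symm using 2
  push_cast
  field_simp
  ring

theorem lie_Uf_Vf_mem_span
    (hUV : ∀ i j : ℕ, ⁅Uf i, Vf j⁆ =
      (((i : ℤ) - (j : ℤ) + 1) : k) • Vf (i + j + 1)
        - ((4 * ((i : ℤ) - (j : ℤ))) : k) • Vf (i + j - 1))
    (m i j : ℕ) :
    ⁅Uf (m + i), Vf (m + j)⁆ ∈ span k (range fun s => Vf (2 * m + s)) := by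
  obtain ⟨rfl, rfl⟩ | ⟨s, hs⟩ : (i = 0 ∧ j = 0) ∨ ∃ s, i + j = s + 1 :=
    (i + j).eq_zero_or_eq_succ_pred.imp (by omega) fun h => ⟨_, h⟩
  · simp only [hUV, add_zero, sub_self, mul_zero, zero_smul, sub_zero]
    exact smul_mem _ _ (subset_span ⟨1, by ring_nf⟩)
  · rw [hUV, show m + i + (m + j) + 1 = 2 * m + (s + 2) by omega,
      show m + i + (m + j) - 1 = 2 * m + s by omega]
    exact sub_mem (smul_mem _ _ (subset_span ⟨_, rfl⟩)) (smul_mem _ _ (subset_span ⟨_, rfl⟩))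

theorem Vf_mem_span_image2_lie [CharZero k]
    (hUV : ∀ i j : ℕ, ⁅Uf i, Vf j⁆ =
      (((i : ℤ) - (j : ℤ) + 1) : k) • Vf (i + j + 1)
        - ((4 * ((i : ℤ) - (j : ℤ))) : k) • Vf (i + j - 1))
    (m t : ℕ) :
    Vf (2 * m + t) ∈ span k (image2 (⁅·, ·⁆) (range fun j => Uf (m + j))
      (range fun j => Vf (m + j))) := by
  have mem (i j : ℕ) : ⁅Uf (m + i), Vf (m + j)⁆ ∈ span k (image2 (⁅·, ·⁆)
      (range fun j => Uf (m + j)) (range fun j => Vf (m + j))) :=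
    subset_span ⟨_, ⟨i, rfl⟩, _, ⟨j, rfl⟩, rfl⟩
  cases t with
  | zero =>
    have h : Vf (2 * m + 0) = (4 : k)⁻¹ • ⁅Uf (m + 0), Vf (m + 1)⁆ := by
      rw [hUV, show m + 0 + (m + 1) - 1 = 2 * m + 0 by omega]
      push_cast
      module
    rw [h]
    exact smul_mem _ _ (mem 0 1)
  | succ s =>
    have h : Vf (2 * m + (s + 1)) =
        (2 : k)⁻¹ • (⁅Uf (m + s), Vf (m + 0)⁆ + ⁅Uf (m + 0), Vf (m + s)⁆) := by
      rw [hUV, hUV, show m + 0 + (m + s) - 1 = m + s + (m + 0) - 1 by omega,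
        show m + s + (m + 0) + 1 = 2 * m + (s + 1) by omega,
        show m + 0 + (m + s) + 1 = 2 * m + (s + 1) by omega]
      push_cast
      module
    rw [h]
    exact smul_mem _ _ (add_mem (mem s 0) (mem 0 s))

end Brackets

section Derived

variable {k b : Type*} [Field k] [CharZero k] [LieRing b] [LieAlgebra k b] {Uf Vf : ℕ → b}

theorem span_image2_lie_Uf_Uf
    (hUU : ∀ i j : ℕ, ⁅Uf i, Uf j⁆ =
      (((i : ℤ) - (j : ℤ)) : k) • (Uf (i + j + 1) - (4 : k) • Uf (i + j - 1)))
    (m : ℕ) :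
    span k (image2 (⁅·, ·⁆) (range fun j => Uf (m + j)) (range fun j => Uf (m + j))) =
      span k (range fun s => Uf (2 * m + 2 + s) - (4 : k) • Uf (2 * m + s)) := by
  refine le_antisymm (span_le.2 ?_) (span_le.2 ?_)
  · rintro _ ⟨_, ⟨i, rfl⟩, _, ⟨j, rfl⟩, rfl⟩
    exact lie_Uf_Uf_mem_span hUU m i j
  · rintro _ ⟨s, rfl⟩
    simp only [SetLike.mem_coe, Uf_sub_four_smul_Uf_eq_smul_lie hUU m s]
    exact smul_mem _ _ (subset_span ⟨_, ⟨s + 1, rfl⟩, _, ⟨0, rfl⟩, rfl⟩)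

theorem span_image2_lie_Uf_Vf
    (hUV : ∀ i j : ℕ, ⁅Uf i, Vf j⁆ =
      (((i : ℤ) - (j : ℤ) + 1) : k) • Vf (i + j + 1)
        - ((4 * ((i : ℤ) - (j : ℤ))) : k) • Vf (i + j - 1))
    (m : ℕ) :
    span k (image2 (⁅·, ·⁆) (range fun j => Uf (m + j)) (range fun j => Vf (m + j))) =
      span k (range fun s => Vf (2 * m + s)) := by
  refine le_antisymm (span_le.2 ?_) (span_le.2 ?_)
  · rintro _ ⟨_, ⟨i, rfl⟩, _, ⟨j, rfl⟩, rfl⟩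
    exact lie_Uf_Vf_mem_span hUV m i j
  · rintro _ ⟨t, rfl⟩
    exact Vf_mem_span_image2_lie hUV m t

end Derived

section Quotients

variable {k M : Type*} [Field k] [AddCommGroup M] [Module k M]

theorem finrank_quotient_span_sub_smul {U : ℕ → M} (hU : LinearIndependent k U) (c : k)
    (m : ℕ) :
    Module.finrank k (span k (range fun j => U (m + j)) ⧸
      comap (span k (range fun j => U (m + j))).subtype
        (span k (range fun s => U (2 * m + 2 + s) - c • U (2 * m + s)))) = m + 2 := by
  obtain ⟨φ, hφ⟩ := hU.exists_linearMap_apply_eq (foldedCoord c m id)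
  rw [finrank_quotient_comap_eq_card (fun t : Fin (m + 2) => U (m + t)) φ, Fintype.card_fin]
  · rw [span_le]
    rintro _ ⟨s, rfl⟩
    simp [hφ, foldedCoord_two_mul_add_two]
  · exact fun t => subset_span ⟨t, rfl⟩
  · intro t
    rw [hφ, foldedCoord_add, id]
  · rw [span_le]
    rintro _ ⟨j, rfl⟩
    exact mem_span_sub_smul_sup_span_window U c m j

theorem finrank_quotient_span_sub_smul_sup {U V : ℕ → M}
    (hUV : LinearIndependent k (Sum.elim U V)) (c : k) (m : ℕ) :
    Module.finrank k (span k (range (fun j => U (m + j)) ∪ range (fun j => V (m + j))) ⧸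
      comap (span k (range (fun j => U (m + j)) ∪ range (fun j => V (m + j)))).subtype
        (span k (range fun s => U (2 * m + 2 + s) - c • U (2 * m + s)) ⊔
          span k (range fun s => V (2 * m + s)))) = 2 * m + 2 := by
  obtain ⟨φ, hφ⟩ := hUV.exists_linearMap_apply_eq <|
    Sum.elim (foldedCoord c m Sum.inl) (windowSingle m m (Sum.inr : Fin m → Fin (m + 2) ⊕ Fin m))
  have hφU (i : ℕ) : φ (U i) = foldedCoord c m Sum.inl i := hφ (.inl i)
  have hφV (i : ℕ) : φ (V i) = windowSingle m m Sum.inr i := hφ (.inr i)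
  rw [finrank_quotient_comap_eq_card
    (Sum.elim (fun t : Fin (m + 2) => U (m + t)) (fun t : Fin m => V (m + t))) φ,
    Fintype.card_sum, Fintype.card_fin, Fintype.card_fin]
  · omega
  · refine sup_le (span_le.2 ?_) (span_le.2 ?_)
    · rintro _ ⟨s, rfl⟩
      simp [hφU, foldedCoord_two_mul_add_two]
    · rintro _ ⟨s, rfl⟩
      simp [hφV, windowSingle_of_le _ (show m + m ≤ 2 * m + s by omega)]
  · rintro (t | t)
    · exact subset_span (Or.inl ⟨t, rfl⟩)
    · exact subset_span (Or.inr ⟨t, rfl⟩)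
  · rintro (t | t)
    · exact (hφU _).trans (foldedCoord_add c m _ t)
    · exact (hφV _).trans (windowSingle_add m m _ t)
  · rw [span_le]
    rintro _ (⟨j, rfl⟩ | ⟨j, rfl⟩)
    · refine sup_le_sup (le_sup_left (b := span k (range fun s => V (2 * m + s))))
        (span_mono ?_) (mem_span_sub_smul_sup_span_window U c m j)
      rintro _ ⟨t, rfl⟩
      exact ⟨.inl t, rfl⟩
    · by_cases hj : j < m
      · exact mem_sup_right (subset_span ⟨.inr ⟨j, hj⟩, rfl⟩)
      · obtain ⟨s, rfl⟩ : ∃ s, j = m + s := ⟨j - m, by omega⟩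
        exact mem_sup_left (mem_sup_right (subset_span ⟨s, by simp only [two_mul, add_assoc]⟩))

theorem disjoint_span_sub_smul_span {U V : ℕ → M} (hUV : LinearIndependent k (Sum.elim U V))
    (c : k) (m : ℕ) :
    Disjoint (span k (range fun s => U (2 * m + 2 + s) - c • U (2 * m + s)))
      (span k (range fun s => V (2 * m + s))) := by
  refine (linearIndependent_sum.mp hUV).2.2.mono (span_le.2 ?_) (span_mono ?_)
  · rintro _ ⟨s, rfl⟩
    exact sub_mem (subset_span ⟨_, rfl⟩) (smul_mem _ _ (subset_span ⟨_, rfl⟩))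
  · rintro _ ⟨s, rfl⟩
    exact ⟨_, rfl⟩

end Quotients

/-- `Uf i` and `Vf i` stand for `U_{i-1}` and `V_{i-1}`, and `m` for `n + 1`. -/
theorem bcca_filtration_derived_subalgebras_and_abelianisations_general
    {k : Type*} [Field k] [CharZero k]
    {b : Type*} [LieRing b] [LieAlgebra k b]
    (Uf Vf : ℕ → b)
    (hindep : LinearIndependent k (Sum.elim Uf Vf))
    (hUU : ∀ i j : ℕ, ⁅Uf i, Uf j⁆ =
      (((i : ℤ) - (j : ℤ)) : k) • (Uf (i + j + 1) - (4 : k) • Uf (i + j - 1)))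
    (hUV : ∀ i j : ℕ, ⁅Uf i, Vf j⁆ =
      (((i : ℤ) - (j : ℤ) + 1) : k) • Vf (i + j + 1)
        - ((4 * ((i : ℤ) - (j : ℤ))) : k) • Vf (i + j - 1))
    (hVV : ∀ i j : ℕ, ⁅Vf i, Vf j⁆ = 0)
    (m : ℕ)
    (FO : Submodule k b)
    (hFO : FO = Submodule.span k (Set.range fun j : ℕ => Uf (m + j)))
    (Fb : Submodule k b)
    (hFb : Fb = Submodule.span k
      (Set.range (fun j : ℕ => Uf (m + j)) ∪ Set.range (fun j : ℕ => Vf (m + j))))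
    -- the derived subalgebras `[F_nO, F_nO]` and `[F_n b, F_n b]`
    (DO : Submodule k b)
    (hDO : DO = Submodule.span k {x : b | ∃ y ∈ FO, ∃ z ∈ FO, x = ⁅y, z⁆})
    (Db : Submodule k b)
    (hDb : Db = Submodule.span k {x : b | ∃ y ∈ Fb, ∃ z ∈ Fb, x = ⁅y, z⁆}) :
    -- (i)
    (DO = Submodule.span k
        (Set.range fun j : ℕ => Uf (2 * m + 2 + j) - (4 : k) • Uf (2 * m + j)) ∧
      Module.finrank k (FO ⧸ Submodule.comap FO.subtype DO) = m + 2) ∧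
    -- (ii)
    (Db = DO ⊔ Submodule.span k (Set.range fun j : ℕ => Vf (2 * m + j)) ∧
      DO ⊓ Submodule.span k (Set.range fun j : ℕ => Vf (2 * m + j)) = ⊥ ∧
      Module.finrank k (Fb ⧸ Submodule.comap Fb.subtype Db) = 2 * m + 2) := by
  subst hFO hFb
  have hUU_span := span_image2_lie_Uf_Uf hUU m
  have hUV_span := span_image2_lie_Uf_Vf hUV m
  have hVV_span : span k (image2 (⁅·, ·⁆) (range fun j => Vf (m + j))
      (range fun j => Vf (m + j))) = ⊥ :=
    span_eq_bot.2 <| by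
      rintro _ ⟨_, ⟨i, rfl⟩, _, ⟨j, rfl⟩, rfl⟩
      exact hVV _ _
  have hDO' : DO = span k (range fun s => Uf (2 * m + 2 + s) - (4 : k) • Uf (2 * m + s)) := by
    rw [hDO, span_lie_span_span, hUU_span]
  have hDb' : Db = DO ⊔ span k (range fun s => Vf (2 * m + s)) := by
    rw [hDb, span_lie_span_span, image2_union_left, image2_union_right, image2_union_right,
      span_union, span_union, span_union, span_image2_lie_comm (range fun j => Vf (m + j)),
      hUU_span, hUV_span, hVV_span, hDO', sup_bot_eq, sup_assoc, sup_idem]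
  refine ⟨⟨hDO', ?_⟩, hDb', ?_, ?_⟩
  · rw [hDO']
    exact finrank_quotient_span_sub_smul (linearIndependent_sum.mp hindep).1 4 m
  · rw [hDO', ← disjoint_iff]
    exact disjoint_span_sub_smul_span hindep 4 m
  · rw [hDb', hDO']
    exact finrank_quotient_span_sub_smul_sup hindep 4 m

/-- Let `k` be a field of characteristic zero and `b` the (centreless) BCCA: the Lie algebra with
basis `{U_n, V_n : n ≥ -1}` and brackets `[U_n,U_m] = (n−m)(U_{n+m+2} − 4U_{n+m})`,
`[U_n,V_m] = (n−m+1)V_{n+m+2} − 4(n−m)V_{n+m}`, `[V_n,V_m] = 0`.  Below the basis is re-indexed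
by `ℕ`: `Uf i` and `Vf i` stand for `U_{i−1}` and `V_{i−1}`, so `n ≥ −1` corresponds to
`m := n + 1 ∈ ℕ`, and `F_nO = span{Uf j : j ≥ m}`, `F_n b = span{Uf j, Vf j : j ≥ m}`.
Then, for every `m` (i.e. every integer `n = m − 1 ≥ −1`):
(i) `[F_nO, F_nO] = span{U_{2n+3+j} − 4·U_{2n+1+j} : j ∈ ℕ}` (indices `2m+2+j`, `2m+j` after
re-indexing) and `dim F_nO/[F_nO,F_nO] = n + 3 = m + 2`;
(ii) `[F_n b, F_n b] = [F_nO, F_nO] ⊕ span{V_{2n+1+j} : j ∈ ℕ}` (index `2m+j` after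
re-indexing) and `dim F_n b/[F_n b, F_n b] = 2n + 4 = 2m + 2`. -/
theorem bcca_filtration_derived_subalgebras_and_abelianisations
    {k : Type*} [Field k] [CharZero k]
    {b : Type*} [LieRing b] [LieAlgebra k b]
    (Uf Vf : ℕ → b)
    (hindep : LinearIndependent k (Sum.elim Uf Vf))
    (hspan : Submodule.span k (Set.range Uf ∪ Set.range Vf) = ⊤)
    (hUU : ∀ i j : ℕ, ⁅Uf i, Uf j⁆ =
      (((i : ℤ) - (j : ℤ)) : k) • (Uf (i + j + 1) - (4 : k) • Uf (i + j - 1)))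
    (hUV : ∀ i j : ℕ, ⁅Uf i, Vf j⁆ =
      (((i : ℤ) - (j : ℤ) + 1) : k) • Vf (i + j + 1)
        - ((4 * ((i : ℤ) - (j : ℤ))) : k) • Vf (i + j - 1))
    (hVV : ∀ i j : ℕ, ⁅Vf i, Vf j⁆ = 0)
    (m : ℕ)
    (FO : Submodule k b)
    (hFO : FO = Submodule.span k (Set.range fun j : ℕ => Uf (m + j)))
    (Fb : Submodule k b)
    (hFb : Fb = Submodule.span k
      (Set.range (fun j : ℕ => Uf (m + j)) ∪ Set.range (fun j : ℕ => Vf (m + j))))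
    -- the derived subalgebras `[F_nO, F_nO]` and `[F_n b, F_n b]`
    (DO : Submodule k b)
    (hDO : DO = Submodule.span k {x : b | ∃ y ∈ FO, ∃ z ∈ FO, x = ⁅y, z⁆})
    (Db : Submodule k b)
    (hDb : Db = Submodule.span k {x : b | ∃ y ∈ Fb, ∃ z ∈ Fb, x = ⁅y, z⁆}) :
    -- (i)
    (DO = Submodule.span k
        (Set.range fun j : ℕ => Uf (2 * m + 2 + j) - (4 : k) • Uf (2 * m + j)) ∧
      Module.finrank k (FO ⧸ Submodule.comap FO.subtype DO) = m + 2) ∧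
    -- (ii)
    (Db = DO ⊔ Submodule.span k (Set.range fun j : ℕ => Vf (2 * m + j)) ∧
      DO ⊓ Submodule.span k (Set.range fun j : ℕ => Vf (2 * m + j)) = ⊥ ∧
      Module.finrank k (Fb ⧸ Submodule.comap Fb.subtype Db) = 2 * m + 2) :=
  bcca_filtration_derived_subalgebras_and_abelianisations_general Uf Vf hindep hUU hUV hVV m FO hFO
    Fb hFb DO hDO Db hDb
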